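/- Assume in addition that ν is finite and nonzero, and let p̄ be the unique solution in (max(p̲,−1), ∞) of Φ(q) = (q+1)Φ′(q). Then the map q ↦ Φ(q)/(q+1) is strictly increasing on (max(p̲,−1), p̄) and strictly decreasing on (p̄, ∞). -/

import Mathlib

open MeasureTheory Real Set Filter

noncomputable section

/-- Real power with the convention `0 ^ r = 0` for every exponent `r`. -/
def pw (x r : ℝ) : ℝ := if x = 0 then 0 else x ^ r

/-- The state space `S` of ranked mass configurations: nonincreasing nonnegative
sequences with total sum at most `1` (sum condition stated via partial sums). -/
def inS (s : ℕ → ℝ) : Prop :=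
  (∀ i, 0 ≤ s i) ∧ (∀ i, s (i + 1) ≤ s i) ∧ ∀ F : Finset ℕ, ∑ i ∈ F, s i ≤ 1

/-- The configuration `(1, 0, 0, …)`. -/
def oneConf : ℕ → ℝ := fun i => if i = 0 then 1 else 0

/-- A dislocation measure: a measure on sequences, carried by `S`, giving no mass
to `(1,0,…)`, integrating `1 - s₁`, and conserving total mass (carried by
configurations with `Σ sᵢ = 1`). -/
structure IsDislocation (ν : Measure (ℕ → ℝ)) : Prop where
  carried : ν {s | ¬ (inS s ∧ HasSum s 1)} = 0
  no_one : ν {oneConf} = 0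
  int_one_sub : ∫⁻ s, ENNReal.ofReal (1 - s 0) ∂ν < ⊤

/-- `p̲ := inf {p ∈ ℝ : ∫_S Σ_{i≥2} sᵢ^{p+1} ν(ds) < ∞}`, as an extended real
(possibly `-∞`, and `+∞` if no `p` qualifies). -/
def pLow (ν : Measure (ℕ → ℝ)) : EReal :=
  sInf {x : EReal | ∃ p : ℝ, x = (p : EReal) ∧
    ∫⁻ s, ∑' i, ENNReal.ofReal (pw (s (i + 1)) (p + 1)) ∂ν < ⊤}

/-- `Φ(q) := ∫_S (1 - Σ_{i≥1} sᵢ^{q+1}) ν(ds)`. -/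
def Phi (ν : Measure (ℕ → ℝ)) (q : ℝ) : ℝ :=
  ∫ s, (1 - ∑' i, pw (s i) (q + 1)) ∂ν

/-!
Dominated differentiation under the integral (after turning the series into an integral against
counting measure) shows that `Φ` is differentiable on `J = (max(p̲, -1), ∞)` with
`Φ'(q) = -∫ Σ sᵢ^{q+1} log sᵢ dν`, which is antitone since `log sᵢ ≤ 0`.
Then `ψ(q) := (q + 1) Φ'(q) - Φ(q)` is antitone on `J` as well: by the mean value theorem and the
monotonicity of `Φ'`, `ψ(b) - ψ(a) ≤ (a + 1)(Φ'(b) - Φ'(a)) ≤ 0`. As `p̄` is its only zero,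
`ψ` is positive before `p̄` and negative after it, and `ψ(q) / (q + 1)²` is the derivative of
`Φ(q) / (q + 1)`.
-/

section RealAnalysis

variable {f f' : ℝ → ℝ} {c : ℝ}

theorem antitoneOn_add_mul_deriv_sub {J : Set ℝ} (hJ : J.OrdConnected)
    (hc : ∀ x ∈ J, 0 ≤ x + c) (hf : ∀ x ∈ J, HasDerivAt f (f' x) x) (hf' : AntitoneOn f' J) :
    AntitoneOn (fun x => (x + c) * f' x - f x) J := by
  intro a ha b hb hab
  rcases hab.eq_or_lt with rfl | hlt
  · exact le_rfl
  have hIcc : Icc a b ⊆ J := hJ.out ha hb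
  obtain ⟨m, hm, hslope⟩ := exists_hasDerivAt_eq_slope f f' hlt
    (fun x hx => (hf x (hIcc hx)).continuousAt.continuousWithinAt)
    (fun x hx => hf x (hIcc (Ioo_subset_Icc_self hx)))
  have hmean : f b - f a = (b - a) * f' m := by
    rw [hslope]; field_simp [(sub_pos.2 hlt).ne']
  have hbm : f' b ≤ f' m := hf' (hIcc (Ioo_subset_Icc_self hm)) hb hm.2.le
  have hba : (a + c) * (f' b - f' a) ≤ 0 :=
    mul_nonpos_of_nonneg_of_nonpos (hc a ha) (sub_nonpos.2 (hf' ha hb hab))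
  linarith [mul_le_mul_of_nonneg_left hbm (sub_pos.2 hlt).le]

theorem AntitoneOn.pos_neg_of_unique_zero {ψ : ℝ → ℝ} {J : Set ℝ} {p : ℝ} (hψ : AntitoneOn ψ J)
    (hp : p ∈ J) (hzero : ψ p = 0) (huniq : ∀ x ∈ J, ψ x = 0 → x = p) :
    (∀ x ∈ J, x < p → 0 < ψ x) ∧ (∀ x ∈ J, p < x → ψ x < 0) :=
  ⟨fun x hx hxp => (hzero ▸ hψ hx hp hxp.le).lt_of_ne fun h => hxp.ne (huniq x hx h.symm),
    fun x hx hpx => (hzero ▸ hψ hp hx hpx.le).lt_of_ne fun h => hpx.ne' (huniq x hx h)⟩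

theorem HasDerivAt.div_add_const {x : ℝ} {d : ℝ} (hf : HasDerivAt f d x) (hx : x + c ≠ 0) :
    HasDerivAt (fun y => f y / (y + c)) (((x + c) * d - f x) / (x + c) ^ 2) x :=
  (hf.div ((hasDerivAt_id' x).add_const c) hx).congr_deriv (by ring)

theorem strictMonoOn_div_add_const {K : Set ℝ} (hK : Convex ℝ K)
    (hf : ∀ x ∈ K, HasDerivAt f (f' x) x) (hc : ∀ x ∈ K, 0 < x + c)
    (h : ∀ x ∈ K, f x < (x + c) * f' x) : StrictMonoOn (fun x => f x / (x + c)) K := by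
  have hd x (hx : x ∈ K) := (hf x hx).div_add_const (hc x hx).ne'
  refine strictMonoOn_of_hasDerivWithinAt_pos hK
    (fun x hx => (hd x hx).continuousAt.continuousWithinAt)
    (fun x hx => (hd x (interior_subset hx)).hasDerivWithinAt) fun x hx => ?_
  have hx := interior_subset hx
  exact div_pos (sub_pos.2 (h x hx)) (pow_pos (hc x hx) 2)

theorem strictAntiOn_div_add_const {K : Set ℝ} (hK : Convex ℝ K)
    (hf : ∀ x ∈ K, HasDerivAt f (f' x) x) (hc : ∀ x ∈ K, 0 < x + c)
    (h : ∀ x ∈ K, (x + c) * f' x < f x) : StrictAntiOn (fun x => f x / (x + c)) K := by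
  have hd x (hx : x ∈ K) := (hf x hx).div_add_const (hc x hx).ne'
  refine strictAntiOn_of_hasDerivWithinAt_neg hK
    (fun x hx => (hd x hx).continuousAt.continuousWithinAt)
    (fun x hx => (hd x (interior_subset hx)).hasDerivWithinAt) fun x hx => ?_
  have hx := interior_subset hx
  exact div_neg_of_neg_of_pos (sub_neg.2 (h x hx)) (pow_pos (hc x hx) 2)

end RealAnalysis

theorem measurable_pw (r : ℝ) : Measurable fun x => pw x r :=
  Measurable.ite (measurableSet_singleton 0) measurable_const (measurable_id.pow_const r)

theorem pw_nonneg {x : ℝ} (hx : 0 ≤ x) (r : ℝ) : 0 ≤ pw x r := by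
  unfold pw; split_ifs <;> positivity

theorem pw_le_one {x r : ℝ} (h0 : 0 ≤ x) (h1 : x ≤ 1) (hr : 0 ≤ r) : pw x r ≤ 1 := by
  unfold pw; split_ifs
  · exact zero_le_one
  · exact rpow_le_one h0 h1 hr

theorem pw_le_pw_of_exponent_ge {x r r' : ℝ} (h0 : 0 ≤ x) (h1 : x ≤ 1) (h : r ≤ r') :
    pw x r' ≤ pw x r := by
  unfold pw; split_ifs with hx
  · exact le_rfl
  · exact rpow_le_rpow_of_exponent_ge (h0.lt_of_ne' hx) h1 h

theorem abs_pw_mul_log_le {x r r' δ : ℝ} (h0 : 0 ≤ x) (h1 : x ≤ 1) (hδ : 0 < δ)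
    (h : r + δ ≤ r') : |pw x r' * log x| ≤ δ⁻¹ * pw x r := by
  unfold pw; split_ifs with hx
  · simp
  have hx0 : 0 < x := h0.lt_of_ne' hx
  calc |x ^ r' * log x| = x ^ r' * |log x| := by rw [abs_mul, abs_of_nonneg (rpow_nonneg h0 _)]
    _ ≤ x ^ (r + δ) * |log x| :=
      mul_le_mul_of_nonneg_right (rpow_le_rpow_of_exponent_ge hx0 h1 h) (abs_nonneg _)
    _ = x ^ r * |log x * x ^ δ| := by
      rw [rpow_add hx0, abs_mul (log x), abs_of_pos (rpow_pos_of_pos hx0 δ)]; ring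
    _ ≤ x ^ r * (1 / δ) := by gcongr; exact (abs_log_mul_self_rpow_lt x δ hx0 h1 hδ).le
    _ = δ⁻¹ * x ^ r := by ring

theorem hasDerivAt_pw {x : ℝ} (hx : 0 ≤ x) (r : ℝ) : HasDerivAt (pw x) (pw x r * log x) r := by
  rcases hx.eq_or_lt with rfl | hx
  · have hpw : pw 0 = fun _ => 0 := funext fun _ => if_pos rfl
    simpa [hpw] using hasDerivAt_const r (0 : ℝ)
  · have hpw : pw x = fun r => x ^ r := funext fun r => if_neg hx.ne'
    rw [hpw]
    exact (hasStrictDerivAt_const_rpow hx r).hasDerivAt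

theorem inS.le_one {s : ℕ → ℝ} (hs : inS s) (i : ℕ) : s i ≤ 1 :=
  (antitone_nat_of_succ_le hs.2.1 (Nat.zero_le i)).trans (by simpa using hs.2.2 {0})

theorem IsDislocation.ae_inS {ν : Measure (ℕ → ℝ)} (hν : IsDislocation ν) : ∀ᵐ s ∂ν, inS s :=
  (ae_iff.2 hν.carried).mono fun _ h => h.1

theorem measurable_eval_prod : Measurable fun z : (ℕ → ℝ) × ℕ => z.1 z.2 :=
  measurable_from_prod_countable_left fun i => measurable_pi_apply i

def phiDomain (ν : Measure (ℕ → ℝ)) : Set ℝ := {q | -1 < q ∧ pLow ν < (q : EReal)}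

section Phi

variable {ν : Measure (ℕ → ℝ)}

theorem mem_phiDomain_of_le {p q : ℝ} (hp : p ∈ phiDomain ν) (hpq : p ≤ q) : q ∈ phiDomain ν :=
  ⟨hp.1.trans_le hpq, hp.2.trans_le (EReal.coe_le_coe_iff.2 hpq)⟩

theorem ordConnected_phiDomain : (phiDomain ν).OrdConnected :=
  ⟨fun _ hx _ _ _ hz => mem_phiDomain_of_le hx hz.1⟩

theorem isOpen_phiDomain : IsOpen (phiDomain ν) :=
  (isOpen_lt continuous_const continuous_id).inter
    (isOpen_lt continuous_const continuous_coe_real_ereal)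

theorem ae_prod_count_mem_Icc (hS : ∀ᵐ s ∂ν, inS s) :
    ∀ᵐ z ∂ν.prod (Measure.count : Measure ℕ), z.1 z.2 ∈ Icc (0 : ℝ) 1 :=
  (Measure.quasiMeasurePreserving_fst.ae (p := fun s : ℕ → ℝ => ∀ i, s i ∈ Icc (0 : ℝ) 1)
    (hS.mono fun _ hs i => ⟨hs.1 i, hs.le_one i⟩)).mono
    fun z hz => hz z.2

theorem lintegral_tsum_tail_lt_top (hS : ∀ᵐ s ∂ν, inS s) {q : ℝ} (hq : pLow ν < q) :
    ∫⁻ s, ∑' i, ENNReal.ofReal (pw (s (i + 1)) (q + 1)) ∂ν < ⊤ := by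
  obtain ⟨_, ⟨p, rfl, hp⟩, hpq⟩ := sInf_lt_iff.1 hq
  refine (lintegral_mono_ae ?_).trans_lt hp
  filter_upwards [hS] with s hs
  exact ENNReal.tsum_le_tsum fun i => ENNReal.ofReal_le_ofReal <|
    pw_le_pw_of_exponent_ge (hs.1 _) (hs.le_one _) (by linarith [EReal.coe_lt_coe_iff.1 hpq])

variable [IsFiniteMeasure ν]

theorem integrable_pw_eval (hS : ∀ᵐ s ∂ν, inS s) {q : ℝ} (hq : q ∈ phiDomain ν) :
    Integrable (fun z : (ℕ → ℝ) × ℕ => pw (z.1 z.2) (q + 1))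
      (ν.prod (Measure.count : Measure ℕ)) := by
  have hmeas : Measurable fun z : (ℕ → ℝ) × ℕ => pw (z.1 z.2) (q + 1) :=
    (measurable_pw _).comp measurable_eval_prod
  refine ⟨hmeas.aestronglyMeasurable, (hasFiniteIntegral_iff_ofReal ?_).2 ?_⟩
  · filter_upwards [ae_prod_count_mem_Icc hS] with z hz using pw_nonneg hz.1 _
  rw [lintegral_prod _ hmeas.ennreal_ofReal.aemeasurable]
  simp only [lintegral_count]
  calc ∫⁻ s, ∑' i, ENNReal.ofReal (pw (s i) (q + 1)) ∂ν
      ≤ ∫⁻ s, 1 + ∑' i, ENNReal.ofReal (pw (s (i + 1)) (q + 1)) ∂ν := by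
        refine lintegral_mono_ae ?_
        filter_upwards [hS] with s hs
        rw [tsum_eq_zero_add' ENNReal.summable]
        gcongr
        exact ENNReal.ofReal_le_one.2 (pw_le_one (hs.1 0) (hs.le_one 0) (by linarith [hq.1]))
    _ = ν univ + ∫⁻ s, ∑' i, ENNReal.ofReal (pw (s (i + 1)) (q + 1)) ∂ν := by
        rw [lintegral_add_left measurable_const, lintegral_const, one_mul]
    _ < ⊤ := ENNReal.add_lt_top.2 ⟨measure_lt_top _ _, lintegral_tsum_tail_lt_top hS hq.2⟩

theorem phi_eq_sub_integral (hS : ∀ᵐ s ∂ν, inS s) {q : ℝ} (hq : q ∈ phiDomain ν) :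
    Phi ν q = ν.real univ - ∫ z, pw (z.1 z.2) (q + 1) ∂ν.prod (Measure.count : Measure ℕ) := by
  have hint := integrable_pw_eval hS hq
  have hsum : ∀ᵐ s ∂ν, ∫ i, pw (s i) (q + 1) ∂Measure.count = ∑' i, pw (s i) (q + 1) := by
    filter_upwards [hint.prod_right_ae] with s hs
    simp [integral_countable hs]
  rw [Phi, integral_sub (integrable_const 1) (hint.integral_prod_left.congr hsum),
    integral_prod _ hint, integral_congr_ae hsum]
  simp

theorem hasDerivAt_integral_pw_eval (hS : ∀ᵐ s ∂ν, inS s) {q₀ : ℝ} (hq₀ : q₀ ∈ phiDomain ν) :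
    Integrable (fun z : (ℕ → ℝ) × ℕ => pw (z.1 z.2) (q₀ + 1) * log (z.1 z.2))
        (ν.prod (Measure.count : Measure ℕ)) ∧
      HasDerivAt (fun q => ∫ z, pw (z.1 z.2) (q + 1) ∂ν.prod (Measure.count : Measure ℕ))
        (∫ z, pw (z.1 z.2) (q₀ + 1) * log (z.1 z.2) ∂ν.prod (Measure.count : Measure ℕ)) q₀ := by
  obtain ⟨l, hl, hlJ⟩ :=
    exists_Ioc_subset_of_mem_nhds (isOpen_phiDomain.mem_nhds hq₀) ⟨q₀ - 1, by linarith⟩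
  -- for `q > p + δ` the `q`-derivatives are dominated by `δ⁻¹ * pw · (p + 1)`, integrable by `hp`
  obtain ⟨p, δ, hp, hδ, hpq₀⟩ : ∃ p δ : ℝ, p ∈ phiDomain ν ∧ 0 < δ ∧ p + δ < q₀ :=
    ⟨(l + q₀) / 2, (q₀ - l) / 4, hlJ ⟨by linarith, by linarith⟩, by linarith, by linarith⟩
  refine hasDerivAt_integral_of_dominated_loc_of_deriv_le (Ioi_mem_nhds hpq₀)
    (Eventually.of_forall fun _ =>
      ((measurable_pw _).comp measurable_eval_prod).aestronglyMeasurable)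
    (integrable_pw_eval hS hq₀)
    (((measurable_pw _).comp measurable_eval_prod).mul
      (measurable_log.comp measurable_eval_prod)).aestronglyMeasurable
    (F := fun q (z : (ℕ → ℝ) × ℕ) => pw (z.1 z.2) (q + 1))
    (F' := fun q (z : (ℕ → ℝ) × ℕ) => pw (z.1 z.2) (q + 1) * log (z.1 z.2))
    (bound := fun z => δ⁻¹ * pw (z.1 z.2) (p + 1)) ?_ ((integrable_pw_eval hS hp).const_mul _) ?_
  · filter_upwards [ae_prod_count_mem_Icc hS] with z hz q hq
    exact (Real.norm_eq_abs _).trans_le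
      (abs_pw_mul_log_le hz.1 hz.2 hδ (by linarith [mem_Ioi.1 hq]))
  · filter_upwards [ae_prod_count_mem_Icc hS] with z hz q _
    exact HasDerivAt.comp_add_const q 1 (hasDerivAt_pw hz.1 (q + 1))

theorem hasDerivAt_phi (hS : ∀ᵐ s ∂ν, inS s) {q : ℝ} (hq : q ∈ phiDomain ν) :
    HasDerivAt (Phi ν)
      (-∫ z, pw (z.1 z.2) (q + 1) * log (z.1 z.2) ∂ν.prod (Measure.count : Measure ℕ)) q :=
  ((hasDerivAt_integral_pw_eval hS hq).2.const_sub _).congr_of_eventuallyEq <|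
    eventually_of_mem (isOpen_phiDomain.mem_nhds hq) fun _ hq' => phi_eq_sub_integral hS hq'

theorem antitoneOn_deriv_phi (hS : ∀ᵐ s ∂ν, inS s) : AntitoneOn (deriv (Phi ν)) (phiDomain ν) := by
  intro a ha b hb hab
  rw [(hasDerivAt_phi hS ha).deriv, (hasDerivAt_phi hS hb).deriv, neg_le_neg_iff]
  refine integral_mono_ae (hasDerivAt_integral_pw_eval hS ha).1
    (hasDerivAt_integral_pw_eval hS hb).1 ?_
  filter_upwards [ae_prod_count_mem_Icc hS] with z hz
  exact mul_le_mul_of_nonpos_right (pw_le_pw_of_exponent_ge hz.1 hz.2 (by linarith))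
    (log_nonpos hz.1 hz.2)

end Phi

theorem phi_ratio_monotonicity_general (ν : Measure (ℕ → ℝ)) (hν : IsDislocation ν)
    [IsFiniteMeasure ν] (pbar : ℝ)
    (hmem : -1 < pbar ∧ pLow ν < (pbar : EReal))
    (heq : Phi ν pbar = (pbar + 1) * deriv (Phi ν) pbar)
    (huniq : ∀ q : ℝ, -1 < q → pLow ν < (q : EReal) →
      Phi ν q = (q + 1) * deriv (Phi ν) q → q = pbar) :
    StrictMonoOn (fun q => Phi ν q / (q + 1))
        {q : ℝ | (-1 < q ∧ pLow ν < (q : EReal)) ∧ q < pbar} ∧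
      StrictAntiOn (fun q => Phi ν q / (q + 1)) (Set.Ioi pbar) := by
  have hderiv : ∀ q ∈ phiDomain ν, HasDerivAt (Phi ν) (deriv (Phi ν) q) q :=
    fun q hq => (hasDerivAt_phi hν.ae_inS hq).differentiableAt.hasDerivAt
  have hψ : AntitoneOn (fun q => (q + 1) * deriv (Phi ν) q - Phi ν q) (phiDomain ν) :=
    antitoneOn_add_mul_deriv_sub ordConnected_phiDomain (fun q hq => by linarith [hq.1]) hderiv
      (antitoneOn_deriv_phi hν.ae_inS)
  obtain ⟨hpos, hneg⟩ := hψ.pos_neg_of_unique_zero hmem (by simp [← heq])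
    fun q hq hq0 => huniq q hq.1 hq.2 (by linarith)
  have hIoi : Ioi pbar ⊆ phiDomain ν := fun q hq => mem_phiDomain_of_le hmem hq.le
  refine ⟨strictMonoOn_div_add_const (ordConnected_phiDomain.inter ordConnected_Iio).convex
      (fun q hq => hderiv q hq.1) (fun q hq => by linarith [hq.1.1])
      (fun q hq => by linarith [hpos q hq.1 hq.2]), ?_⟩
  exact strictAntiOn_div_add_const (convex_Ioi pbar) (fun q hq => hderiv q (hIoi hq))
    (fun q hq => by linarith [mem_Ioi.1 hq, hmem.1])
    (fun q hq => by linarith [hneg q (hIoi hq) hq])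

/-- Assume `ν` finite and nonzero, and let `p̄` be the unique solution in
`J := (max(p̲,-1), ∞)` of `Φ(q) = (q+1)Φ'(q)`. Then `q ↦ Φ(q)/(q+1)` is
strictly increasing on `(max(p̲,-1), p̄)` and strictly decreasing on `(p̄, ∞)`. -/
theorem phi_ratio_monotonicity (ν : Measure (ℕ → ℝ)) (hν : IsDislocation ν)
    [IsFiniteMeasure ν] (hν0 : ν ≠ 0) (pbar : ℝ)
    (hmem : -1 < pbar ∧ pLow ν < (pbar : EReal))
    (heq : Phi ν pbar = (pbar + 1) * deriv (Phi ν) pbar)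
    (huniq : ∀ q : ℝ, -1 < q → pLow ν < (q : EReal) →
      Phi ν q = (q + 1) * deriv (Phi ν) q → q = pbar) :
    StrictMonoOn (fun q => Phi ν q / (q + 1))
        {q : ℝ | (-1 < q ∧ pLow ν < (q : EReal)) ∧ q < pbar} ∧
      StrictAntiOn (fun q => Phi ν q / (q + 1)) (Set.Ioi pbar) :=
  phi_ratio_monotonicity_general ν hν pbar hmem heq huniq
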